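/- arXiv:0708.3919 — 3 statements merged into one kernel-verified Lean document; each statement's English description precedes it below -/
import Mathlib

section
/- For any point (π₁,π₂,π₃,π₄) ∈ ℝ⁴ satisfying π₁²π₂ = π₃² + π₄², π₁ ≥ 0, π₂ ≥ 0, there exists (z₁,z₂) ∈ ℂ² with |z₁|² = π₁, |z₂|² = π₂, Re(z₁²z̄₂) = π₃, Im(z₁²z̄₂) = π₄; i.e., the invariants map of the 1:2 resonance S¹-action is surjective onto the semialgebraic variety defined by these relations. -/
/-- The invariants map (z₁,z₂) ↦ (|z₁|², |z₂|², Re(z₁²z̄₂), Im(z₁²z̄₂)) is surjective onto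
the semialgebraic variety π₁²π₂ = π₃² + π₄², π₁ ≥ 0, π₂ ≥ 0. -/
theorem stmt1 (p₁ p₂ p₃ p₄ : ℝ) (hrel : p₁ ^ 2 * p₂ = p₃ ^ 2 + p₄ ^ 2)
    (h1 : 0 ≤ p₁) (h2 : 0 ≤ p₂) :
    ∃ z₁ z₂ : ℂ, Complex.normSq z₁ = p₁ ∧ Complex.normSq z₂ = p₂ ∧
      (z₁ ^ 2 * (starRingEnd ℂ) z₂).re = p₃ ∧ (z₁ ^ 2 * (starRingEnd ℂ) z₂).im = p₄ := by
  rcases eq_or_lt_of_le h1 with h0 | h0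
  · -- p₁ = 0, hence p₃ = p₄ = 0
    have h3 : p₃ ^ 2 + p₄ ^ 2 = 0 := by rw [← hrel, ← h0]; ring
    have hp3 : p₃ = 0 := by nlinarith [sq_nonneg p₃, sq_nonneg p₄]
    have hp4 : p₄ = 0 := by nlinarith [sq_nonneg p₃, sq_nonneg p₄]
    refine ⟨0, (Real.sqrt p₂ : ℝ), ?_, ?_, ?_, ?_⟩ <;>
      simp [Complex.normSq_ofReal, Real.sq_sqrt h2, ← h0, hp3, hp4, Real.mul_self_sqrt h2]
  · refine ⟨(Real.sqrt p₁ : ℝ), ⟨p₃ / p₁, -p₄ / p₁⟩, ?_, ?_, ?_, ?_⟩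
    · simp [Complex.normSq_ofReal, Real.mul_self_sqrt h1]
    · simp only [Complex.normSq_mk]
      field_simp
      nlinarith [hrel]
    · have : ((Real.sqrt p₁ : ℂ)) ^ 2 = (p₁ : ℂ) := by
        rw [← Complex.ofReal_pow, Real.sq_sqrt h1]
      rw [this]
      simp [Complex.mul_re]; field_simp
    · have : ((Real.sqrt p₁ : ℂ)) ^ 2 = (p₁ : ℂ) := by
        rw [← Complex.ofReal_pow, Real.sq_sqrt h1]
      rw [this]
      simp [Complex.mul_im]; field_simp
end

section
/- Two points (z₁,z₂), (w₁,w₂) ∈ ℂ² have the same values of all four invariants π₁, π₂, π₃, π₄ if and only if they lie on the same orbit of the S¹-action ρ_t(z₁,z₂) = (e^{it}z₁, e^{2it}z₂). -/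
/-!
The invariants π₃, π₄ together say `w₁ ^ 2 * conj w₂ = z₁ ^ 2 * conj z₂`. Equal moduli give
`w₁ = e z₁` with `|e| = 1`; if `z₁ ≠ 0`, cancelling `z₁ ^ 2` in `e² z₁² conj w₂ = z₁² conj z₂`
forces `w₂ = e² z₂`. If `z₁ = 0`, only `|w₂| = |z₂|` is left, and half of the angle rotating
`z₂` onto `w₂` works.
-/

open Complex ComplexConjugate

lemma exists_exp_mul_I_mul_eq_of_normSq_eq {w z : ℂ} (h : normSq w = normSq z) :
    ∃ t : ℝ, w = exp (t * I) * z := by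
  by_cases hz : z = 0
  · exact ⟨0, by simpa [hz] using h⟩
  · have hnorm : ‖w / z‖ = 1 := by
      rw [norm_div, div_eq_one_iff_eq (norm_ne_zero_iff.mpr hz), ← sq_eq_sq₀ (norm_nonneg _)
        (norm_nonneg _), ← normSq_eq_norm_sq, ← normSq_eq_norm_sq, h]
    obtain ⟨t, ht⟩ := (norm_eq_one_iff _).mp hnorm
    exact ⟨t, by rw [ht, div_mul_cancel₀ w hz]⟩

lemma normSq_exp_ofReal_mul_I (t : ℝ) : normSq (exp (t * I)) = 1 := by
  rw [normSq_eq_norm_sq, norm_exp_ofReal_mul_I, one_pow]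

lemma exp_two_mul_ofReal_mul_I (t : ℝ) : exp (2 * t * I) = exp (t * I) ^ 2 := by
  rw [← exp_nat_mul]; ring_nf

lemma sq_mul_conj_mul_sq (e z₁ z₂ : ℂ) :
    (e * z₁) ^ 2 * conj (e ^ 2 * z₂) = normSq e ^ 2 * (z₁ ^ 2 * conj z₂) := by
  rw [map_mul, map_pow, ← mul_conj]; ring

lemma eq_sq_mul_of_sq_mul_conj_eq {e z₁ z₂ w₂ : ℂ} (he : normSq e = 1) (hz₁ : z₁ ≠ 0)
    (h : (e * z₁) ^ 2 * conj w₂ = z₁ ^ 2 * conj z₂) : w₂ = e ^ 2 * z₂ := by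
  have hconj : z₁ ^ 2 * conj w₂ = z₁ ^ 2 * conj (e ^ 2 * z₂) := by
    calc z₁ ^ 2 * conj w₂ = (e * conj e) ^ 2 * z₁ ^ 2 * conj w₂ := by
          rw [mul_conj, he, ofReal_one, one_pow, one_mul]
      _ = conj e ^ 2 * ((e * z₁) ^ 2 * conj w₂) := by ring
      _ = z₁ ^ 2 * conj (e ^ 2 * z₂) := by rw [h, map_mul, map_pow]; ring
  exact star_injective (mul_left_cancel₀ (pow_ne_zero 2 hz₁) hconj)

/-- Two points of ℂ² have the same invariants π₁, π₂, π₃, π₄ iff they lie on the same orbit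
of the S¹-action ρ_t(z₁,z₂) = (e^{it}z₁, e^{2it}z₂). -/
theorem stmt2 (z₁ z₂ w₁ w₂ : ℂ) :
    (Complex.normSq w₁ = Complex.normSq z₁ ∧ Complex.normSq w₂ = Complex.normSq z₂ ∧
      (w₁ ^ 2 * (starRingEnd ℂ) w₂).re = (z₁ ^ 2 * (starRingEnd ℂ) z₂).re ∧
      (w₁ ^ 2 * (starRingEnd ℂ) w₂).im = (z₁ ^ 2 * (starRingEnd ℂ) z₂).im)
    ↔ ∃ t : ℝ, w₁ = Complex.exp (t * Complex.I) * z₁ ∧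
        w₂ = Complex.exp (2 * t * Complex.I) * z₂ := by
  simp only [exp_two_mul_ofReal_mul_I, ← Complex.ext_iff]
  constructor
  · rintro ⟨h₁, h₂, h⟩
    by_cases hz₁ : z₁ = 0
    · obtain ⟨s, hs⟩ := exists_exp_mul_I_mul_eq_of_normSq_eq h₂
      refine ⟨s / 2, by simpa [hz₁] using h₁, ?_⟩
      rw [hs, ← exp_two_mul_ofReal_mul_I]
      congr 2
      push_cast
      ring
    · obtain ⟨t, rfl⟩ := exists_exp_mul_I_mul_eq_of_normSq_eq h₁
      exact ⟨t, rfl, eq_sq_mul_of_sq_mul_conj_eq (normSq_exp_ofReal_mul_I t) hz₁ h⟩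
  · rintro ⟨t, rfl, rfl⟩
    have he := normSq_exp_ofReal_mul_I t
    refine ⟨?_, ?_, ?_⟩
    · rw [normSq_mul, he, one_mul]
    · rw [normSq_mul, map_pow, he, one_pow, one_mul]
    · rw [sq_mul_conj_mul_sq, he, ofReal_one, one_pow, one_mul]
end

section
/- The cubic Q(z) = 2σc²z²(h₂ − z) − 4(Δh − λz)² has a double root if (h₂, Δh) lies either on the line Δh = 0 with h₂ = σ(4λ² − t²)/(2c²) for some t (double root at z = 0), or on the parametrized curve h₂ = σ(t−2λ)(3t−2λ)/(2c²), Δh = σ(t−2λ)t²/(2c²) (double root at z = σt(t−2λ)/c², with the third root z = −σt²/(2c²)). Specifically, for the latter parametrization, Q(z) factors as −2σc²(z − r)²(z + σt²/(2c²)) with r = σt(t−2λ)/c². -/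
noncomputable section

/-- Q(z) = 2σc²z²(h₂ − z) − 4(Δh − λz)². -/
def Q (σ c lam h₂ Δh : ℝ) (z : ℝ) : ℝ :=
  2 * σ * c ^ 2 * z ^ 2 * (h₂ - z) - 4 * (Δh - lam * z) ^ 2

theorem hasDerivAt_Q (σ c lam h₂ Δh z : ℝ) :
    HasDerivAt (Q σ c lam h₂ Δh)
      (2 * σ * c ^ 2 * (2 * h₂ * z - 3 * z ^ 2) + 8 * lam * (Δh - lam * z)) z := by
  have h := (((hasDerivAt_pow 2 z).const_mul (2 * σ * c ^ 2)).mul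
    ((hasDerivAt_id z).const_sub h₂)).sub
    (((((hasDerivAt_id z).const_mul lam).const_sub Δh).pow 2).const_mul 4)
  exact h.congr_deriv (by simp only [id]; ring)

theorem deriv_Q_zero_right_at_zero (σ c lam h₂ : ℝ) : deriv (Q σ c lam h₂ 0) 0 = 0 := by
  simp [(hasDerivAt_Q σ c lam h₂ 0 0).deriv]

theorem Q_eq_of_curve (σ c lam t z : ℝ) (hσ : σ = 1 ∨ σ = -1) (hc : c ≠ 0) :
    Q σ c lam (σ * (t - 2 * lam) * (3 * t - 2 * lam) / (2 * c ^ 2))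
        (σ * (t - 2 * lam) * t ^ 2 / (2 * c ^ 2)) z
      = -2 * σ * c ^ 2 * (z - σ * t * (t - 2 * lam) / c ^ 2) ^ 2
          * (z + σ * t ^ 2 / (2 * c ^ 2)) := by
  unfold Q
  rcases hσ with rfl | rfl <;> field_simp <;> ring

/-- Double roots of Q: on the line Δh = 0, h₂ = σ(4λ²−t²)/(2c²) there is a double root
at z = 0; on the curve h₂ = σ(t−2λ)(3t−2λ)/(2c²), Δh = σ(t−2λ)t²/(2c²) the cubic factors
as Q(z) = −2σc²(z − r)²(z + σt²/(2c²)) with r = σt(t−2λ)/c². -/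
theorem stmt9 (σ c lam t : ℝ) (hσ : σ = 1 ∨ σ = -1) (hc : 0 < c) :
    (Q σ c lam (σ * (4 * lam ^ 2 - t ^ 2) / (2 * c ^ 2)) 0 0 = 0 ∧
      deriv (Q σ c lam (σ * (4 * lam ^ 2 - t ^ 2) / (2 * c ^ 2)) 0) 0 = 0) ∧
    (∀ z : ℝ,
      Q σ c lam (σ * (t - 2 * lam) * (3 * t - 2 * lam) / (2 * c ^ 2))
          (σ * (t - 2 * lam) * t ^ 2 / (2 * c ^ 2)) z
        = -2 * σ * c ^ 2 * (z - σ * t * (t - 2 * lam) / c ^ 2) ^ 2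
            * (z + σ * t ^ 2 / (2 * c ^ 2))) := by
  exact ⟨⟨by simp [Q], deriv_Q_zero_right_at_zero ..⟩,
    fun z => Q_eq_of_curve σ c lam t z hσ hc.ne'⟩
end
end
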